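/- Let k be a nonzero real number and let x, X : H₊ → H be bounded operators between complex Hilbert spaces satisfying x*x − X*X = k²·Id_{H₊} and X*x = x*X. Then: (i) (x* − X*)(x + X) = k²·Id_{H₊} and (x* + X*)(x − X) = k²·Id_{H₊}; (ii) x + X and x − X are injective; (iii) P := (1/k²)·(x + X)(x* − X*) is a continuous idempotent on H whose range equals Ran(x + X) (which is therefore closed in H) and whose kernel equals Ker(x* − X*) = (Ran(x − X))^⊥; consequently H = Ran(x + X) ⊕ Ker(x* − X*) as a topological direct sum. -/

import Mathlib

/- STATEMENT 9 (from the proof of Theorem `orbus`): if `x*x − X*X = k²·Id` and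
`X*x = x*X`, then `(x* − X*)(x + X) = k²·Id = (x* + X*)(x − X)`, `x ± X` are
injective, and `P := (1/k²)(x + X)(x* − X*)` is a continuous idempotent on `H`
with range `Ran(x + X)` (which is closed) and kernel
`Ker(x* − X*) = (Ran(x − X))ᗮ`; consequently
`H = Ran(x + X) ⊕ Ker(x* − X*)` as a topological direct sum. -/

noncomputable section
open ContinuousLinearMap

-- auxiliary: kernel of adjoint equals orthogonal complement of range
lemma aux_ker_adjoint
    (Hplus : Type) [NormedAddCommGroup Hplus] [InnerProductSpace ℂ Hplus]
    [CompleteSpace Hplus]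
    (H : Type) [NormedAddCommGroup H] [InnerProductSpace ℂ H] [CompleteSpace H]
    (T : Hplus →L[ℂ] H) :
    LinearMap.ker ((adjoint T : H →L[ℂ] Hplus) : H →ₗ[ℂ] Hplus) = (LinearMap.range (T : Hplus →ₗ[ℂ] H) : Submodule ℂ H)ᗮ := by
  ext v
  simp only [LinearMap.mem_ker, ContinuousLinearMap.coe_coe, Submodule.mem_orthogonal]
  constructor
  · rintro hv w hw
    obtain ⟨u, rfl⟩ := hw
    have h : inner ℂ (v : H) (T u) = (0 : ℂ) := by
      rw [← ContinuousLinearMap.adjoint_inner_left]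
      simp [hv]
    have := congrArg (starRingEnd ℂ) h
    simpa [inner_conj_symm] using this
  · intro hv
    have h1 : inner ℂ (v : H) (T (adjoint T v)) = (0 : ℂ) := by
      have := hv (T (adjoint T v)) ⟨adjoint T v, rfl⟩
      have := congrArg (starRingEnd ℂ) this
      simpa [inner_conj_symm] using this
    have h0 : inner ℂ (adjoint T v) (adjoint T v) = (0 : ℂ) := by
      rw [ContinuousLinearMap.adjoint_inner_left]
      exact h1
    exact inner_self_eq_zero.mp h0

theorem statement9
    (Hplus : Type) [NormedAddCommGroup Hplus] [InnerProductSpace ℂ Hplus]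
    [CompleteSpace Hplus]
    (H : Type) [NormedAddCommGroup H] [InnerProductSpace ℂ H] [CompleteSpace H]
    (k : ℝ) (hk : k ≠ 0)
    (x X : Hplus →L[ℂ] H)
    (h1 : adjoint x ∘L x - adjoint X ∘L X = (k : ℂ) ^ 2 • (1 : Hplus →L[ℂ] Hplus))
    (h2 : adjoint X ∘L x = adjoint x ∘L X)
    (P : H →L[ℂ] H)
    (hP : P = (1 / (k : ℂ) ^ 2) • ((x + X) ∘L (adjoint x - adjoint X))) :
    -- (i)
    ((adjoint x - adjoint X) ∘L (x + X) = (k : ℂ) ^ 2 • (1 : Hplus →L[ℂ] Hplus) ∧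
      (adjoint x + adjoint X) ∘L (x - X) = (k : ℂ) ^ 2 • (1 : Hplus →L[ℂ] Hplus)) ∧
    -- (ii)
    (Function.Injective ⇑(x + X) ∧ Function.Injective ⇑(x - X)) ∧
    -- (iii): `P` is a (continuous) idempotent with the stated range and kernel,
    -- the range is closed, and `H` is the topological direct sum of them.
    (IsIdempotentElem P ∧
      LinearMap.range (P : H →ₗ[ℂ] H) = LinearMap.range ((x + X : Hplus →L[ℂ] H) : Hplus →ₗ[ℂ] H) ∧
      IsClosed ((LinearMap.range ((x + X : Hplus →L[ℂ] H) : Hplus →ₗ[ℂ] H) : Submodule ℂ H) : Set H) ∧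
      LinearMap.ker (P : H →ₗ[ℂ] H) = LinearMap.ker ((adjoint x - adjoint X : H →L[ℂ] Hplus) : H →ₗ[ℂ] Hplus) ∧
      LinearMap.ker ((adjoint x - adjoint X : H →L[ℂ] Hplus) : H →ₗ[ℂ] Hplus) =
        (LinearMap.range ((x - X : Hplus →L[ℂ] H) : Hplus →ₗ[ℂ] H) : Submodule ℂ H)ᗮ ∧
      IsCompl (LinearMap.range ((x + X : Hplus →L[ℂ] H) : Hplus →ₗ[ℂ] H) : Submodule ℂ H)
        (LinearMap.ker ((adjoint x - adjoint X : H →L[ℂ] Hplus) : H →ₗ[ℂ] Hplus))) := by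
  have kk : ((k : ℂ) ^ 2) ≠ 0 := pow_ne_zero _ (by exact_mod_cast hk)
  have ck : (1 / (k : ℂ) ^ 2) ≠ 0 := one_div_ne_zero kk
  set S : Hplus →L[ℂ] H := x + X with hS
  set A : H →L[ℂ] Hplus := adjoint x - adjoint X with hA
  have e1 : A ∘L S = (k : ℂ) ^ 2 • (1 : Hplus →L[ℂ] Hplus) := by
    rw [hA, hS, sub_comp, comp_add, comp_add, h2, ← h1]
    abel
  have e2 : (adjoint x + adjoint X) ∘L (x - X)
      = (k : ℂ) ^ 2 • (1 : Hplus →L[ℂ] Hplus) := by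
    rw [add_comp, comp_sub, comp_sub, h2, ← h1]
    abel
  have e1' : ∀ u : Hplus, A (S u) = (k : ℂ) ^ 2 • u := by
    intro u
    have h : (A ∘L S) u = ((k : ℂ) ^ 2 • (1 : Hplus →L[ℂ] Hplus)) u := by rw [e1]
    simpa only [ContinuousLinearMap.comp_apply, ContinuousLinearMap.smul_apply,
      ContinuousLinearMap.one_apply] using h
  have injS : Function.Injective ⇑S := by
    intro u v huv
    have hu : (k : ℂ) ^ 2 • u = (k : ℂ) ^ 2 • v := by
      rw [← e1' u, ← e1' v, huv]
    exact smul_right_injective Hplus kk hu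
  have injD : Function.Injective ⇑(x - X) := by
    intro u v huv
    have e2' : ∀ w : Hplus,
        ((adjoint x + adjoint X) ∘L (x - X)) w = (k : ℂ) ^ 2 • w := by
      intro w
      rw [e2]; simp
    have hu : (k : ℂ) ^ 2 • u = (k : ℂ) ^ 2 • v := by
      rw [← e2' u, ← e2' v]
      simp only [ContinuousLinearMap.comp_apply]
      rw [huv]
    exact smul_right_injective Hplus kk hu
  have hPv : ∀ v : H, P v = (1 / (k : ℂ) ^ 2) • S (A v) := by
    intro v; rw [hP]; rfl
  have mid : (S ∘L A) ∘L (S ∘L A) = (k : ℂ) ^ 2 • (S ∘L A) := by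
    ext v
    simp only [ContinuousLinearMap.comp_apply, ContinuousLinearMap.smul_apply]
    rw [e1' (A v), map_smul]
  have hPP : P ∘L P = P := by
    rw [hP, smul_comp, comp_smul, smul_smul, mid, smul_smul]
    congr 1
    field_simp
  have hIdem : IsIdempotentElem P := by
    show P * P = P
    rw [ContinuousLinearMap.mul_def]
    exact hPP
  have hPPv : ∀ v : H, P (P v) = P v := by
    intro v
    have : (P ∘L P) v = P v := by rw [hPP]
    simpa using this
  have hrange : LinearMap.range (P : H →ₗ[ℂ] H) = LinearMap.range (S : Hplus →ₗ[ℂ] H) := by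
    apply le_antisymm
    · rintro v ⟨w, rfl⟩
      exact ⟨(1 / (k : ℂ) ^ 2) • A w, by simp only [ContinuousLinearMap.coe_coe]; rw [map_smul, ← hPv]⟩
    · rintro v ⟨u, rfl⟩
      refine ⟨S u, ?_⟩
      simp only [ContinuousLinearMap.coe_coe]
      rw [hPv, e1' u, map_smul, smul_smul]
      rw [one_div, inv_mul_cancel₀ kk, one_smul]
  have hkerP : LinearMap.ker (P : H →ₗ[ℂ] H) = LinearMap.ker (A : H →ₗ[ℂ] Hplus) := by
    ext v
    simp only [LinearMap.mem_ker, ContinuousLinearMap.coe_coe]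
    constructor
    · intro hv
      rw [hPv] at hv
      have hSAv : S (A v) = 0 := by
        rcases smul_eq_zero.mp hv with h | h
        · exact absurd h ck
        · exact h
      have : S (A v) = S 0 := by simpa using hSAv
      exact injS this
    · intro hv
      rw [hPv, hv]
      simp
  have hker1 : LinearMap.range (P : H →ₗ[ℂ] H) = LinearMap.ker ((1 - P : H →L[ℂ] H) : H →ₗ[ℂ] H) := by
    ext v
    simp only [LinearMap.mem_ker, ContinuousLinearMap.coe_coe, ContinuousLinearMap.sub_apply,
      ContinuousLinearMap.one_apply, sub_eq_zero]
    constructor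
    · rintro ⟨u, rfl⟩
      exact (hPPv u).symm
    · intro hv
      exact ⟨v, hv.symm⟩
  have hclosed : IsClosed ((LinearMap.range (S : Hplus →ₗ[ℂ] H) : Submodule ℂ H) : Set H) := by
    rw [← hrange, hker1]
    exact ContinuousLinearMap.isClosed_ker _
  have hAd : LinearMap.ker (A : H →ₗ[ℂ] Hplus) = (LinearMap.range ((x - X : Hplus →L[ℂ] H) : Hplus →ₗ[ℂ] H) : Submodule ℂ H)ᗮ := by
    have : adjoint (x - X) = A := by rw [map_sub, hA]
    rw [← this, aux_ker_adjoint]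
  have hcompl : IsCompl (LinearMap.range (S : Hplus →ₗ[ℂ] H) : Submodule ℂ H) (LinearMap.ker (A : H →ₗ[ℂ] Hplus)) := by
    rw [← hrange, ← hkerP]
    constructor
    · rw [disjoint_iff]
      ext v
      simp only [Submodule.mem_inf, Submodule.mem_bot, LinearMap.mem_range,
        LinearMap.mem_ker, ContinuousLinearMap.coe_coe]
      constructor
      · rintro ⟨⟨u, rfl⟩, hv⟩
        rw [← hPPv u, hv]
      · rintro rfl
        exact ⟨⟨0, map_zero P⟩, map_zero P⟩
    · rw [codisjoint_iff, eq_top_iff]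
      intro v _
      have : v = P v + (v - P v) := by abel
      rw [this]
      refine Submodule.add_mem_sup ⟨v, rfl⟩ ?_
      simp only [LinearMap.mem_ker, ContinuousLinearMap.coe_coe, map_sub, hPPv v, sub_self]
  exact ⟨⟨e1, e2⟩, ⟨injS, injD⟩, hIdem, hrange, hclosed, hkerP, hAd, hcompl⟩
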